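/- arXiv:2410.08904 — 2 statements merged into one kernel-verified Lean document; each statement's English description precedes it below -/
import Mathlib

section
/- L¹ bound on the scattering-equation error term: There exists a constant C > 0, depending only on χ, such that for every R ≥ R₀, the error term E_R(x) := 4 ∇ϕ₀(x) · ∇(χ(·/R))(x) + 2 ϕ₀(x) Δ(χ(·/R))(x) satisfies ‖E_R‖_{L¹(ℝ³)} ≤ C a; in particular the bound is uniform in R. -/
noncomputable section

open Real MeasureTheory

abbrev E3 : Type := EuclideanSpace ℝ (Fin 3)

/-- The Laplacian `Δf(x) = ∑_j ∂²f/∂x_j²(x)` (meaningful for C² functions). -/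
def lap (f : E3 → ℝ) (x : E3) : ℝ :=
  ∑ j : Fin 3,
    fderiv ℝ (fun y => fderiv ℝ f y (EuclideanSpace.single j (1 : ℝ))) x
      (EuclideanSpace.single j (1 : ℝ))

/-- `V` is a nonnegative, radial, integrable potential supported in the ball of
radius `R₀`. -/
structure IsPotential (V : E3 → ℝ) (R₀ : ℝ) : Prop where
  nonneg : ∀ x, 0 ≤ V x
  radial : ∀ x y : E3, ‖x‖ = ‖y‖ → V x = V y
  integrable : Integrable V
  radius_pos : 0 < R₀
  supp : ∀ x : E3, R₀ ≤ ‖x‖ → V x = 0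

/-- `χ` is a smooth radial cutoff with values in `[0,1]`, equal to `1` on
`{|x| ≤ 1}` and to `0` on `{|x| ≥ 2}`. -/
structure IsCutoff (χ : E3 → ℝ) : Prop where
  smooth : ContDiff ℝ (⊤ : ℕ∞) χ
  nonneg : ∀ x, 0 ≤ χ x
  le_one : ∀ x, χ x ≤ 1
  radial : ∀ x y : E3, ‖x‖ = ‖y‖ → χ x = χ y
  eq_one : ∀ x : E3, ‖x‖ ≤ 1 → χ x = 1
  eq_zero : ∀ x : E3, 2 ≤ ‖x‖ → χ x = 0

/-- `φ` is the zero-energy scattering solution of `V` with scattering length `a`: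
a `C¹` function with `0 ≤ φ ≤ 1` solving `2Δφ + V(1−φ) = 0` in the sense of
distributions on `ℝ³`, and equal to `a/|x|` outside the ball of radius `R₀`. -/
structure IsScatteringSolution (V : E3 → ℝ) (φ : E3 → ℝ) (a R₀ : ℝ) : Prop where
  c1 : ContDiff ℝ 1 φ
  nonneg : ∀ x, 0 ≤ φ x
  le_one : ∀ x, φ x ≤ 1
  weak_eq : ∀ η : E3 → ℝ, ContDiff ℝ (⊤ : ℕ∞) η → HasCompactSupport η →
    2 * ∫ x, φ x * lap η x + ∫ x, V x * (1 - φ x) * η x = 0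
  outside : ∀ x : E3, R₀ ≤ ‖x‖ → φ x = a / ‖x‖
  a_pos : 0 < a

/-- The error term `E_R = 4 ∇φ₀ · ∇(χ(·/R)) + 2 φ₀ Δ(χ(·/R))` appearing in the
scattering equation for the truncated scattering solution `φ₀ · χ(·/R)`. -/
def scatErr (φ₀ χ : E3 → ℝ) (R : ℝ) (x : E3) : ℝ :=
  4 * (@inner ℝ E3 _ (gradient φ₀ x) (gradient (fun y => χ (R⁻¹ • y)) x))
    + 2 * φ₀ x * lap (fun y => χ (R⁻¹ • y)) x

theorem test : True := trivial

/-! ### Auxiliary lemmas -/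

lemma fderiv_eq_zero_of_const_on {F : Type*} [NormedAddCommGroup F] [NormedSpace ℝ F]
    {f : E3 → F} {U : Set E3} (hU : IsOpen U) {cst : F}
    (hf : ∀ y ∈ U, f y = cst) {x : E3} (hx : x ∈ U) : fderiv ℝ f x = 0 := by
  have h : f =ᶠ[nhds x] fun _ => cst :=
    Filter.eventuallyEq_of_mem (hU.mem_nhds hx) hf
  rw [h.fderiv_eq, fderiv_const_apply]

lemma hasFDerivAt_comp_smul {f : E3 → ℝ} (hf : Differentiable ℝ f) (c : ℝ) (x : E3) :
    HasFDerivAt (fun y => f (c • y)) (c • fderiv ℝ f (c • x)) x := by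
  have h1 : HasFDerivAt (fun y : E3 => c • y) (c • ContinuousLinearMap.id ℝ E3) x :=
    (hasFDerivAt_id x).const_smul c
  have h2 : HasFDerivAt (fun y => f (c • y))
      ((fderiv ℝ f (c • x)).comp (c • ContinuousLinearMap.id ℝ E3)) x :=
    (hf (c • x)).hasFDerivAt.comp x h1
  convert h2 using 1
  ext v
  simp [mul_comm]

lemma lap_comp_smul (χ : E3 → ℝ) (hχ : ContDiff ℝ (⊤ : ℕ∞) χ) (c : ℝ) (x : E3) :
    lap (fun y => χ (c • y)) x = ∑ j : Fin 3,
      c * (c * fderiv ℝ (fderiv ℝ χ) (c • x) (EuclideanSpace.single j (1 : ℝ))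
        (EuclideanSpace.single j (1 : ℝ))) := by
  unfold lap
  refine Finset.sum_congr rfl fun j _ => ?_
  set e : E3 := EuclideanSpace.single j (1 : ℝ) with he
  have hDdiff : Differentiable ℝ (fderiv ℝ χ) :=
    (hχ.fderiv_right (m := (⊤ : ℕ∞)) (by simp)).differentiable (by simp)
  have hfun : (fun y => fderiv ℝ (fun y' => χ (c • y')) y e)
      = fun y => c * ((fun z => fderiv ℝ χ z e) (c • y)) := by
    funext y
    rw [(hasFDerivAt_comp_smul (hχ.differentiable (by simp)) c y).fderiv]
    simp [mul_comm]
  rw [hfun]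
  have hg : HasFDerivAt (fun z' => fderiv ℝ χ z' e)
      ((fderiv ℝ (fderiv ℝ χ) (c • x)).flip e) (c • x) := by
    have h := (hDdiff (c • x)).hasFDerivAt.clm_apply (hasFDerivAt_const e (c • x))
    simpa using h
  have hcomp : HasFDerivAt (fun y => (fun z => fderiv ℝ χ z e) (c • y))
      (((fderiv ℝ (fderiv ℝ χ) (c • x)).flip e).comp (c • ContinuousLinearMap.id ℝ E3)) x :=
    hg.comp x ((hasFDerivAt_id x).const_smul c)
  have hmul := hcomp.const_mul c
  rw [hmul.fderiv]
  simp [mul_comm]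

lemma exists_bound_of_zero_outside {F : Type*} [NormedAddCommGroup F] [NormedSpace ℝ F]
    {g : E3 → F} (hg : Continuous g) (hz : ∀ z : E3, 2 < ‖z‖ → g z = 0) :
    ∃ K : ℝ, 0 ≤ K ∧ ∀ y, ‖g y‖ ≤ K := by
  have hsupp : HasCompactSupport g := by
    apply HasCompactSupport.of_support_subset_isCompact (isCompact_closedBall (0 : E3) 2)
    intro y hy
    simp only [Function.mem_support] at hy
    by_contra h
    exact hy (hz y (by simpa [Metric.mem_closedBall, not_le, dist_eq_norm] using h))
  obtain ⟨K, hK⟩ := hsupp.exists_bound_of_continuous hg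
  exact ⟨K, le_trans (norm_nonneg (g 0)) (hK 0), hK⟩

lemma norm_fderiv_inv_norm_le {a : ℝ} (ha : 0 < a) {x : E3} (hx : x ≠ 0) :
    ‖fderiv ℝ (fun y : E3 => a * ‖y‖⁻¹) x‖ ≤ a / ‖x‖ ^ 2 := by
  have hnx : ‖x‖ ≠ 0 := norm_ne_zero_iff.mpr hx
  have hdn : DifferentiableAt ℝ (fun y : E3 => ‖y‖) x :=
    ((contDiffAt_norm ℝ (n := 1) hx).differentiableAt one_ne_zero)
  set N := fderiv ℝ (fun y : E3 => ‖y‖) x with hN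
  have h1 : HasFDerivAt (fun y : E3 => ‖y‖⁻¹) ((-(‖x‖ ^ 2)⁻¹) • N) x :=
    (hasDerivAt_inv hnx).comp_hasFDerivAt x hdn.hasFDerivAt
  have h2 : HasFDerivAt (fun y : E3 => a * ‖y‖⁻¹) (a • ((-(‖x‖ ^ 2)⁻¹) • N)) x :=
    h1.const_mul a
  rw [h2.fderiv, norm_smul, norm_smul]
  have hb' := norm_fderiv_le_of_lipschitz (f := fun y : E3 => ‖y‖) (x₀ := x) ℝ
    lipschitzWith_one_norm
  have hb : ‖N‖ ≤ 1 := by simpa using hb'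
  have : ‖a‖ * (‖-(‖x‖ ^ 2)⁻¹‖ * ‖N‖) ≤ a * ((‖x‖ ^ 2)⁻¹ * 1) := by
    rw [norm_neg, Real.norm_eq_abs, Real.norm_eq_abs, abs_of_pos ha,
      abs_of_pos (by positivity : (0 : ℝ) < (‖x‖ ^ 2)⁻¹)]
    gcongr
  calc ‖a‖ * (‖-(‖x‖ ^ 2)⁻¹‖ * ‖N‖) ≤ a * ((‖x‖ ^ 2)⁻¹ * 1) := this
    _ = a / ‖x‖ ^ 2 := by field_simp

theorem scattering_error_term_L1_bound
    (χ : E3 → ℝ) (hχ : IsCutoff χ) :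
    ∃ C : ℝ, 0 < C ∧
      ∀ (V : E3 → ℝ) (R₀ a : ℝ) (φ₀ : E3 → ℝ),
        IsPotential V R₀ → IsScatteringSolution V φ₀ a R₀ →
        (∃ M : ℝ, ∀ x, ‖gradient φ₀ x‖ ≤ M) →
        ∀ R : ℝ, R₀ ≤ R →
          (∫⁻ x, ENNReal.ofReal |scatErr φ₀ χ R x|) ≤ ENNReal.ofReal (C * a) := by
  classical
  have hsm := hχ.smooth
  have hdiff : Differentiable ℝ χ := hsm.differentiable (by simp)
  have hD1c : Continuous (fderiv ℝ χ) := (hsm.fderiv_right (m := (⊤ : ℕ∞)) (by simp)).continuous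
  have hD2c : Continuous (fderiv ℝ (fderiv ℝ χ)) :=
    ((hsm.fderiv_right (m := (⊤ : ℕ∞)) (by simp)).fderiv_right (m := (⊤ : ℕ∞)) (by simp)).continuous
  have hU1 : IsOpen {y : E3 | ‖y‖ < 1} := isOpen_lt continuous_norm continuous_const
  have hU2 : IsOpen {y : E3 | 2 < ‖y‖} := isOpen_lt continuous_const continuous_norm
  have hD1z : ∀ z : E3, (‖z‖ < 1 ∨ 2 < ‖z‖) → fderiv ℝ χ z = 0 := by
    rintro z (hz | hz)
    · exact fderiv_eq_zero_of_const_on hU1 (fun y hy => hχ.eq_one y (le_of_lt hy)) hz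
    · exact fderiv_eq_zero_of_const_on hU2 (fun y hy => hχ.eq_zero y (le_of_lt hy)) hz
  have hD2z : ∀ z : E3, (‖z‖ < 1 ∨ 2 < ‖z‖) → fderiv ℝ (fderiv ℝ χ) z = 0 := by
    rintro z (hz | hz)
    · exact fderiv_eq_zero_of_const_on hU1 (fun y hy => hD1z y (Or.inl hy)) hz
    · exact fderiv_eq_zero_of_const_on hU2 (fun y hy => hD1z y (Or.inr hy)) hz
  obtain ⟨K₁, hK₁0, hK₁⟩ := exists_bound_of_zero_outside hD1c
    (fun z hz => hD1z z (Or.inr hz))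
  obtain ⟨K₂, hK₂0, hK₂⟩ := exists_bound_of_zero_outside (F := E3 →L[ℝ] E3 →L[ℝ] ℝ) hD2c
    (fun z hz => hD2z z (Or.inr hz))
  set v : ℝ := (volume (Metric.ball (0 : E3) 1)).toReal with hv
  have hv0 : 0 ≤ v := ENNReal.toReal_nonneg
  have hX0 : 0 ≤ (4 * K₁ + 6 * K₂) * 8 * v :=
    mul_nonneg (mul_nonneg (by linarith) (by norm_num)) hv0
  refine ⟨(4 * K₁ + 6 * K₂) * 8 * v + 1, by linarith, ?_⟩
  intro V R₀ a φ₀ hV hφ _ R hRR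
  have hR₀ : 0 < R₀ := hV.radius_pos
  have hR : 0 < R := lt_of_lt_of_le hR₀ hRR
  have ha : 0 < a := hφ.a_pos
  have hinv : 0 < R⁻¹ := inv_pos.mpr hR
  have hfχR : ∀ x : E3, fderiv ℝ (fun y => χ (R⁻¹ • y)) x = R⁻¹ • fderiv ℝ χ (R⁻¹ • x) :=
    fun x => (hasFDerivAt_comp_smul hdiff R⁻¹ x).fderiv
  have hgradχR : ∀ x : E3, gradient (fun y => χ (R⁻¹ • y)) x =
      (InnerProductSpace.toDual ℝ E3).symm (R⁻¹ • fderiv ℝ χ (R⁻¹ • x)) := by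
    intro x
    have : gradient (fun y => χ (R⁻¹ • y)) x =
        (InnerProductSpace.toDual ℝ E3).symm (fderiv ℝ (fun y => χ (R⁻¹ • y)) x) := rfl
    rw [this, hfχR x]
  have hnorm_smul : ∀ x : E3, ‖R⁻¹ • x‖ = R⁻¹ * ‖x‖ := fun x => by
    rw [norm_smul, Real.norm_eq_abs, abs_of_pos hinv]
  have hzero : ∀ x : E3, (‖R⁻¹ • x‖ < 1 ∨ 2 < ‖R⁻¹ • x‖) → scatErr φ₀ χ R x = 0 := by
    intro x hx
    unfold scatErr
    rw [lap_comp_smul χ hsm R⁻¹ x, hgradχR x, hD1z _ hx, hD2z _ hx]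
    simp
  set bnd : ℝ := (4 * K₁ + 6 * K₂) * a / R ^ 3 with hbnd
  have hbnd0 : 0 ≤ bnd :=
    div_nonneg (mul_nonneg (by linarith) ha.le) (by positivity)
  have hae : ∀ᵐ x : E3, ENNReal.ofReal |scatErr φ₀ χ R x|
      ≤ (Metric.closedBall (0 : E3) (2 * R)).indicator (fun _ => ENNReal.ofReal bnd) x := by
    have hsp : (Metric.sphere (0 : E3) R)ᶜ ∈ ae volume :=
      compl_mem_ae_iff.mpr (Measure.addHaar_sphere volume 0 R)
    filter_upwards [hsp] with x hx
    have hxR : ‖x‖ ≠ R := by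
      simpa [Metric.mem_sphere, dist_zero_right] using hx
    rcases lt_or_gt_of_ne hxR with h | h
    · have h0 : scatErr φ₀ χ R x = 0 := by
        refine hzero x (Or.inl ?_)
        rw [hnorm_smul x]
        have := mul_lt_mul_of_pos_left h hinv
        rwa [inv_mul_cancel₀ hR.ne'] at this
      rw [h0]
      simpa using zero_le _
    rcases le_or_gt ‖x‖ (2 * R) with h2 | h2
    · -- main case : R < ‖x‖ ≤ 2R
      have hmem : x ∈ Metric.closedBall (0 : E3) (2 * R) := by
        simpa [Metric.mem_closedBall, dist_zero_right] using h2
      rw [Set.indicator_of_mem hmem]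
      refine ENNReal.ofReal_le_ofReal ?_
      have hout : R₀ < ‖x‖ := lt_of_le_of_lt hRR h
      have hxpos : 0 < ‖x‖ := lt_trans hR h
      have hxne : x ≠ 0 := norm_pos_iff.mp hxpos
      -- bound on ‖∇φ₀ x‖
      have heq : φ₀ =ᶠ[nhds x] fun y : E3 => a * ‖y‖⁻¹ := by
        refine Filter.eventuallyEq_of_mem
          ((isOpen_lt continuous_const continuous_norm).mem_nhds hout) fun y hy => ?_
        rw [hφ.outside y (le_of_lt hy), div_eq_mul_inv]
      have e1 : ‖gradient φ₀ x‖ ≤ a / R ^ 2 := by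
        have hgr : gradient φ₀ x =
            (InnerProductSpace.toDual ℝ E3).symm (fderiv ℝ φ₀ x) := rfl
        rw [hgr, LinearIsometryEquiv.norm_map, heq.fderiv_eq]
        calc ‖fderiv ℝ (fun y : E3 => a * ‖y‖⁻¹) x‖ ≤ a / ‖x‖ ^ 2 :=
              norm_fderiv_inv_norm_le ha hxne
          _ ≤ a / R ^ 2 := by gcongr
      -- bound on ‖∇χR x‖
      have e2 : ‖gradient (fun y => χ (R⁻¹ • y)) x‖ ≤ R⁻¹ * K₁ := by
        rw [hgradχR x, LinearIsometryEquiv.norm_map, norm_smul, Real.norm_eq_abs,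
          abs_of_pos hinv]
        exact mul_le_mul_of_nonneg_left (hK₁ _) hinv.le
      -- bound on φ₀ x
      have e3 : φ₀ x ≤ a / R := by
        rw [hφ.outside x (le_of_lt hout)]
        exact div_le_div_of_nonneg_left ha.le hR (le_of_lt h)
      -- bound on |lap|
      have e4 : |lap (fun y => χ (R⁻¹ • y)) x| ≤ 3 * (R⁻¹ * (R⁻¹ * K₂)) := by
        rw [lap_comp_smul χ hsm R⁻¹ x]
        calc |∑ j : Fin 3, R⁻¹ * (R⁻¹ * fderiv ℝ (fderiv ℝ χ) (R⁻¹ • x)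
                (EuclideanSpace.single j (1 : ℝ)) (EuclideanSpace.single j (1 : ℝ)))|
            ≤ ∑ j : Fin 3, |R⁻¹ * (R⁻¹ * fderiv ℝ (fderiv ℝ χ) (R⁻¹ • x)
                (EuclideanSpace.single j (1 : ℝ)) (EuclideanSpace.single j (1 : ℝ)))| :=
              Finset.abs_sum_le_sum_abs _ _
          _ ≤ ∑ _j : Fin 3, R⁻¹ * (R⁻¹ * K₂) := by
              refine Finset.sum_le_sum fun j _ => ?_
              rw [abs_mul, abs_mul, abs_of_pos hinv]
              have hone : ‖EuclideanSpace.single j (1 : ℝ)‖ = 1 := by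
                rw [EuclideanSpace.norm_single, norm_one]
              have hb1 : ‖fderiv ℝ (fderiv ℝ χ) (R⁻¹ • x)
                  (EuclideanSpace.single j (1 : ℝ)) (EuclideanSpace.single j (1 : ℝ))‖
                  ≤ K₂ := by
                calc ‖fderiv ℝ (fderiv ℝ χ) (R⁻¹ • x) (EuclideanSpace.single j (1 : ℝ))
                      (EuclideanSpace.single j (1 : ℝ))‖
                    ≤ ‖fderiv ℝ (fderiv ℝ χ) (R⁻¹ • x) (EuclideanSpace.single j (1 : ℝ))‖
                      * ‖EuclideanSpace.single j (1 : ℝ)‖ :=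
                      ContinuousLinearMap.le_opNorm _ _
                  _ ≤ (‖fderiv ℝ (fderiv ℝ χ) (R⁻¹ • x)‖
                      * ‖EuclideanSpace.single j (1 : ℝ)‖)
                      * ‖EuclideanSpace.single j (1 : ℝ)‖ := by
                      gcongr
                      exact ContinuousLinearMap.le_opNorm _ _
                  _ ≤ K₂ := by rw [hone]; simpa using hK₂ _
              have : |fderiv ℝ (fderiv ℝ χ) (R⁻¹ • x) (EuclideanSpace.single j (1 : ℝ))
                  (EuclideanSpace.single j (1 : ℝ))| ≤ K₂ := hb1
              gcongr
          _ = 3 * (R⁻¹ * (R⁻¹ * K₂)) := by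
              rw [Finset.sum_const, Finset.card_univ, Fintype.card_fin, nsmul_eq_mul]
              norm_num
      -- combine
      unfold scatErr
      have hin : |@inner ℝ E3 _ (gradient φ₀ x) (gradient (fun y => χ (R⁻¹ • y)) x)|
          ≤ (a / R ^ 2) * (R⁻¹ * K₁) := by
        calc |@inner ℝ E3 _ (gradient φ₀ x) (gradient (fun y => χ (R⁻¹ • y)) x)|
            ≤ ‖gradient φ₀ x‖ * ‖gradient (fun y => χ (R⁻¹ • y)) x‖ :=
              abs_real_inner_le_norm _ _
          _ ≤ (a / R ^ 2) * (R⁻¹ * K₁) :=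
              mul_le_mul e1 e2 (norm_nonneg _) (by positivity)
      have hlapb : φ₀ x * |lap (fun y => χ (R⁻¹ • y)) x|
          ≤ (a / R) * (3 * (R⁻¹ * (R⁻¹ * K₂))) :=
        mul_le_mul e3 e4 (abs_nonneg _) (by positivity)
      calc |4 * (@inner ℝ E3 _ (gradient φ₀ x) (gradient (fun y => χ (R⁻¹ • y)) x))
            + 2 * φ₀ x * lap (fun y => χ (R⁻¹ • y)) x|
          ≤ 4 * |@inner ℝ E3 _ (gradient φ₀ x) (gradient (fun y => χ (R⁻¹ • y)) x)|
            + 2 * (φ₀ x * |lap (fun y => χ (R⁻¹ • y)) x|) := by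
            have h1 := abs_add_le (4 * (@inner ℝ E3 _ (gradient φ₀ x)
              (gradient (fun y => χ (R⁻¹ • y)) x)))
              (2 * φ₀ x * lap (fun y => χ (R⁻¹ • y)) x)
            have h2 : |2 * φ₀ x * lap (fun y => χ (R⁻¹ • y)) x|
                = 2 * (φ₀ x * |lap (fun y => χ (R⁻¹ • y)) x|) := by
              rw [abs_mul, abs_mul]
              rw [abs_of_pos (by norm_num : (0:ℝ) < 2), abs_of_nonneg (hφ.nonneg x)]
              ring
            have h3 : |4 * (@inner ℝ E3 _ (gradient φ₀ x)
                (gradient (fun y => χ (R⁻¹ • y)) x))|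
                = 4 * |@inner ℝ E3 _ (gradient φ₀ x)
                  (gradient (fun y => χ (R⁻¹ • y)) x)| := by
              rw [abs_mul, abs_of_pos (by norm_num : (0:ℝ) < 4)]
            rw [h2, h3] at h1
            exact h1
        _ ≤ 4 * ((a / R ^ 2) * (R⁻¹ * K₁)) + 2 * ((a / R) * (3 * (R⁻¹ * (R⁻¹ * K₂)))) := by
            linarith [hin, hlapb]
        _ = bnd := by
            rw [hbnd]
            field_simp
            ring
    · have h0 : scatErr φ₀ χ R x = 0 := by
        refine hzero x (Or.inr ?_)
        rw [hnorm_smul x]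
        have h3 := mul_lt_mul_of_pos_left h2 hinv
        calc (2:ℝ) = R⁻¹ * (2 * R) := by field_simp
          _ < R⁻¹ * ‖x‖ := h3
      rw [h0]
      simpa using zero_le _
  calc (∫⁻ x, ENNReal.ofReal |scatErr φ₀ χ R x|)
      ≤ ∫⁻ x, (Metric.closedBall (0 : E3) (2 * R)).indicator
          (fun _ => ENNReal.ofReal bnd) x := lintegral_mono_ae hae
    _ = ENNReal.ofReal bnd * volume (Metric.closedBall (0 : E3) (2 * R)) := by
        rw [lintegral_indicator measurableSet_closedBall, setLIntegral_const]
    _ ≤ ENNReal.ofReal (((4 * K₁ + 6 * K₂) * 8 * v + 1) * a) := by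
        rw [Measure.addHaar_closedBall volume (0 : E3) (by positivity : (0:ℝ) ≤ 2 * R)]
        rw [finrank_euclideanSpace_fin]
        have hvol : volume (Metric.ball (0 : E3) 1) = ENNReal.ofReal v :=
          (ENNReal.ofReal_toReal measure_ball_lt_top.ne).symm
        rw [hvol, ← ENNReal.ofReal_mul (by positivity : (0:ℝ) ≤ (2 * R) ^ 3),
          ← ENNReal.ofReal_mul hbnd0]
        refine ENNReal.ofReal_le_ofReal ?_
        have heq2 : bnd * ((2 * R) ^ 3 * v) = (4 * K₁ + 6 * K₂) * 8 * v * a := by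
          rw [hbnd]
          field_simp
          ring
        rw [heq2]
        have hle : (4 * K₁ + 6 * K₂) * 8 * v ≤ (4 * K₁ + 6 * K₂) * 8 * v + 1 := by linarith
        exact mul_le_mul_of_nonneg_right hle ha.le
end
end

section
/- Uniform boundedness of the Huang–Yang-type momentum integral (estimate of the term II_{a;4} in Proposition 5.3): There exists a constant C > 0 such that for every κ ∈ (0,1], ∫_{ℝ³} dp ∫_{{r ∈ ℝ³ : |r| < 1 < |r+p| ≤ 3}} dr ∫_{{r' ∈ ℝ³ : |r'| < κ < |r'−p| ≤ 3κ}} dr' · 1/(|r+p|² − |r|² + |r'−p|² − |r'|²) ≤ C. (On the domain of integration the denominator is strictly positive.) -/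
/-!
Uniform boundedness of the Huang–Yang-type momentum integral (estimate of the
term II_{a;4} in Proposition 5.3): there is `C > 0` such that for every
`κ ∈ (0,1]`,
`∫_{ℝ³} dp ∫_{|r|<1<|r+p|≤3} dr ∫_{|r'|<κ<|r'−p|≤3κ} dr'
  1/(|r+p|² − |r|² + |r'−p|² − |r'|²) ≤ C`.
-/

noncomputable section

open MeasureTheory

/-- The Huang–Yang momentum-integral domain, for the ratio `κ = k_F^↓/k_F^↑`:
the set of triples `(p, r, r')` with `|r| < 1 < |r+p| ≤ 3` and
`|r'| < κ < |r'−p| ≤ 3κ`. -/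
def HYdomain (κ : ℝ) : Set (E3 × E3 × E3) :=
  {z | ‖z.2.1‖ < 1 ∧ 1 < ‖z.2.1 + z.1‖ ∧ ‖z.2.1 + z.1‖ ≤ 3 ∧
       ‖z.2.2‖ < κ ∧ κ < ‖z.2.2 - z.1‖ ∧ ‖z.2.2 - z.1‖ ≤ 3 * κ}

/-!
On the domain, with `t = |r| < 1 < u = |r+p|`, the denominator is at least
`u² - t² ≥ (1 - t) + (u - 1) ≥ √(1 - t) √(u - 1)`, while `|r'| < |r'-p|` makes the `r'`-part
nonnegative. The integrand is therefore dominated, uniformly in `κ ≤ 1`, by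
`|‖r‖ - 1|^(-1/2) |‖r+p‖ - 1|^(-1/2)` times the indicator of `|r'-p| < 4`. After the shifts
`r' ↦ r' + p` and `p ↦ p - r` this factorises into a product of integrals over `ℝ³`, and the
radial singularity `|‖x‖ - 1|^(-1/2)` is integrable on balls in polar coordinates since the
exponent exceeds `-1`.
-/

open Set Metric
open scoped ENNReal

theorem intervalIntegrable_abs_sub_rpow {r : ℝ} (hr : -1 < r) (a b c : ℝ) :
    IntervalIntegrable (fun x => |x - c| ^ r) volume a b := by
  suffices h : ∀ a b : ℝ, IntervalIntegrable (fun x => |x| ^ r) volume a b by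
    simpa using (h (a - c) (b - c)).comp_sub_right c
  have from_zero : ∀ t, IntervalIntegrable (fun x => |x| ^ r) volume 0 t := by
    have nonneg : ∀ t, 0 ≤ t → IntervalIntegrable (fun x => |x| ^ r) volume 0 t := by
      intro t ht
      refine (intervalIntegral.intervalIntegrable_rpow' hr).congr ?_
      intro x hx
      rw [uIoc_of_le ht] at hx
      simp [abs_of_pos hx.1]
    intro t
    rcases le_total 0 t with ht | ht
    · exact nonneg t ht
    · simpa using (nonneg (-t) (neg_nonneg.2 ht)).comp_sub_left 0
  intro a b
  exact (from_zero a).symm.trans (from_zero b)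

theorem integrableOn_ball_abs_norm_sub_rpow {E : Type*} [NormedAddCommGroup E]
    [NormedSpace ℝ E] [Nontrivial E] [FiniteDimensional ℝ E] [MeasurableSpace E] [BorelSpace E]
    (μ : Measure E) [μ.IsAddHaarMeasure] {r : ℝ} (hr : -1 < r) (a R : ℝ) :
    IntegrableOn (fun x => |‖x‖ - a| ^ r) (ball 0 R) μ := by
  rw [integrableOn_fun_norm_addHaar μ (f := fun y => |y - a| ^ r)]
  have := ((intervalIntegrable_abs_sub_rpow hr 0 R a).continuousOn_mul
    (g := fun y : ℝ => y ^ (Module.finrank ℝ E - 1)) (by fun_prop))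
  exact (intervalIntegrable_iff.1 this).mono_set (Ioo_subset_Ioc_self.trans Ioc_subset_uIoc)

theorem lintegral_mul_comp_add_mul_comp_sub {G : Type*} [MeasurableSpace G] [AddCommGroup G]
    [MeasurableAdd₂ G] [MeasurableSub₂ G] (μ : Measure G) [SFinite μ] [μ.IsAddRightInvariant]
    {f g h : G → ℝ≥0∞} (hf : Measurable f) (hg : Measurable g) (hh : Measurable h) :
    ∫⁻ z, f z.2.1 * g (z.2.1 + z.1) * h (z.2.2 - z.1) ∂μ.prod (μ.prod μ) =
      (∫⁻ x, f x ∂μ) * (∫⁻ x, g x ∂μ) * ∫⁻ x, h x ∂μ := by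
  have hF : Measurable fun z : G × G × G => f z.2.1 * g (z.2.1 + z.1) * h (z.2.2 - z.1) := by
    fun_prop
  calc ∫⁻ z, f z.2.1 * g (z.2.1 + z.1) * h (z.2.2 - z.1) ∂μ.prod (μ.prod μ)
      = ∫⁻ p, ∫⁻ r, ∫⁻ r', f r * g (r + p) * h (r' - p) ∂μ ∂μ ∂μ := by
        rw [lintegral_prod _ hF.aemeasurable]
        refine lintegral_congr fun p => ?_
        exact lintegral_prod _ (hF.comp measurable_prodMk_left).aemeasurable
    _ = ∫⁻ p, ∫⁻ r, f r * g (r + p) * ∫⁻ x, h x ∂μ ∂μ ∂μ := by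
        refine lintegral_congr fun p => lintegral_congr fun r => ?_
        rw [lintegral_const_mul _ (by fun_prop), lintegral_sub_right_eq_self]
    _ = ∫⁻ r, ∫⁻ p, f r * g (r + p) * ∫⁻ x, h x ∂μ ∂μ ∂μ :=
        lintegral_lintegral_swap (by fun_prop)
    _ = (∫⁻ x, f x ∂μ) * (∫⁻ x, g x ∂μ) * ∫⁻ x, h x ∂μ := by
        rw [← lintegral_mul_const _ hf, ← lintegral_mul_const _ (hf.mul_const _)]
        refine lintegral_congr fun r => ?_
        simp_rw [add_comm r]
        rw [lintegral_mul_const _ (by fun_prop), lintegral_const_mul _ (by fun_prop),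
          lintegral_add_right_eq_self]

theorem one_div_le_abs_sub_one_rpow_mul {t u v w : ℝ} (ht₀ : 0 ≤ t) (ht : t < 1) (hu : 1 < u)
    (hw₀ : 0 ≤ w) (hwv : w ≤ v) :
    1 / (u ^ 2 - t ^ 2 + v ^ 2 - w ^ 2) ≤ |t - 1| ^ (-(1 / 2) : ℝ) * |u - 1| ^ (-(1 / 2) : ℝ) := by
  have ha : 0 < 1 - t := by linarith
  have hb : 0 < u - 1 := by linarith
  have hsa := Real.sq_sqrt ha.le
  have hsb := Real.sq_sqrt hb.le
  have hpos : 0 < √(1 - t) * √(u - 1) := by positivity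
  have hden : √(1 - t) * √(u - 1) ≤ u ^ 2 - t ^ 2 + v ^ 2 - w ^ 2 := by
    nlinarith [sq_nonneg (√(1 - t) - √(u - 1)), mul_le_mul hwv hwv hw₀ (hw₀.trans hwv)]
  rw [abs_sub_comm, abs_of_pos ha, abs_of_pos hb, Real.rpow_neg ha.le, Real.rpow_neg hb.le,
    ← Real.sqrt_eq_rpow, ← Real.sqrt_eq_rpow, ← mul_inv, ← one_div]
  exact one_div_le_one_div_of_le hpos hden

def fermiSurfaceSingularity : E3 → ℝ≥0∞ :=
  (ball 0 4).indicator fun y => ENNReal.ofReal (|‖y‖ - 1| ^ (-(1 / 2) : ℝ))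

theorem measurable_fermiSurfaceSingularity : Measurable fermiSurfaceSingularity :=
  Measurable.indicator (by fun_prop) measurableSet_ball

theorem lintegral_fermiSurfaceSingularity_lt_top : ∫⁻ x, fermiSurfaceSingularity x < ∞ := by
  rw [fermiSurfaceSingularity, lintegral_indicator measurableSet_ball]
  exact (integrableOn_ball_abs_norm_sub_rpow volume (by norm_num) 1 4).setLIntegral_lt_top

def hyMajorant (z : E3 × E3 × E3) : ℝ≥0∞ :=
  fermiSurfaceSingularity z.2.1 * fermiSurfaceSingularity (z.2.1 + z.1) *
    (ball (0 : E3) 4).indicator 1 (z.2.2 - z.1)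

theorem measurable_hyMajorant : Measurable hyMajorant := by
  have hS := measurable_fermiSurfaceSingularity
  have hball : Measurable ((ball (0 : E3) 4).indicator (1 : E3 → ℝ≥0∞)) :=
    measurable_one.indicator measurableSet_ball
  unfold hyMajorant
  fun_prop

theorem lintegral_hyMajorant_lt_top : ∫⁻ z, hyMajorant z < ∞ := by
  simp only [hyMajorant]
  rw [Measure.volume_eq_prod, Measure.volume_eq_prod,
    lintegral_mul_comp_add_mul_comp_sub _ measurable_fermiSurfaceSingularity
      measurable_fermiSurfaceSingularity (measurable_one.indicator measurableSet_ball),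
    lintegral_indicator_one measurableSet_ball]
  exact ENNReal.mul_lt_top (ENNReal.mul_lt_top lintegral_fermiSurfaceSingularity_lt_top
    lintegral_fermiSurfaceSingularity_lt_top) measure_ball_lt_top

theorem ofReal_one_div_le_hyMajorant {κ : ℝ} (hκ : κ ≤ 1) {z : E3 × E3 × E3}
    (hz : z ∈ HYdomain κ) :
    ENNReal.ofReal
      (1 / (‖z.2.1 + z.1‖ ^ 2 - ‖z.2.1‖ ^ 2 + ‖z.2.2 - z.1‖ ^ 2 - ‖z.2.2‖ ^ 2)) ≤ hyMajorant z := by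
  obtain ⟨hr, hrp, hrp3, hr', hr'p, hr'p3⟩ := hz
  have mem_ball_four {x : E3} (hx : ‖x‖ ≤ 3) : x ∈ ball 0 4 := by
    rw [mem_ball_zero_iff]; linarith
  rw [hyMajorant, fermiSurfaceSingularity,
    indicator_of_mem (mem_ball_four (by linarith)), indicator_of_mem (mem_ball_four hrp3),
    indicator_of_mem (mem_ball_four (by linarith)), Pi.one_apply, mul_one,
    ← ENNReal.ofReal_mul (by positivity)]
  exact ENNReal.ofReal_le_ofReal (one_div_le_abs_sub_one_rpow_mul (norm_nonneg _) hr hrp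
    (norm_nonneg _) (by linarith))

theorem huang_yang_momentum_integral_bound :
    ∃ C : ℝ, 0 < C ∧
      ∀ κ : ℝ, κ ∈ Set.Ioc (0 : ℝ) 1 →
        (∫⁻ z in HYdomain κ,
            ENNReal.ofReal
              (1 / (‖z.2.1 + z.1‖ ^ 2 - ‖z.2.1‖ ^ 2 + ‖z.2.2 - z.1‖ ^ 2 - ‖z.2.2‖ ^ 2)))
          ≤ ENNReal.ofReal C := by
  set M := ∫⁻ z, hyMajorant z
  refine ⟨M.toReal + 1, by positivity, fun κ hκ => ?_⟩
  calc _ ≤ ∫⁻ z in HYdomain κ, hyMajorant z :=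
        setLIntegral_mono measurable_hyMajorant fun z hz => ofReal_one_div_le_hyMajorant hκ.2 hz
    _ ≤ M := setLIntegral_le_lintegral _ _
    _ ≤ ENNReal.ofReal (M.toReal + 1) := by
        rw [ENNReal.le_ofReal_iff_toReal_le lintegral_hyMajorant_lt_top.ne (by positivity)]
        linarith
end
end
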